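/- The univariate polynomials J_P(x, 1) = Σ_{a ∈ PB} x^{ι(a)} and J_P(1, y) = Σ_{a ∈ PB} y^{ε(a)} are interpolating. -/

import Mathlib

open Finset

variable {n : ℕ}

/-- The set of bases of the integer polymatroid with rank function `f` on ground set `Fin n`:
integer vectors `a` with `a i ≥ 0`, `∑_{i ∈ I} a i ≤ f I` for every `I`, and `∑ i, a i = f [n]`.
(The upper bound `a i ≤ f {i}` used for the ambient finite set is implied by the constraints.) -/
noncomputable def PB (n : ℕ) (f : Finset (Fin n) → ℕ) : Finset (Fin n → ℤ) :=
  (Fintype.piFinset fun i : Fin n => Finset.Icc (0 : ℤ) (f {i})).filter fun a =>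
    (∀ I : Finset (Fin n), ∑ j ∈ I, a j ≤ (f I : ℤ)) ∧ ∑ j, a j = (f Finset.univ : ℤ)

/-- A set `I` is tight for `a` if `∑_{i ∈ I} a i = f I`. -/
def Tight (f : Finset (Fin n) → ℕ) (a : Fin n → ℤ) (I : Finset (Fin n)) : Prop :=
  ∑ i ∈ I, a i = (f I : ℤ)

/-- `i` is internally active with respect to `a`: `a - e_i + e_j ∉ PB` for every `j < i`. -/
def IntAct (f : Finset (Fin n) → ℕ) (a : Fin n → ℤ) (i : Fin n) : Prop :=
  ∀ j : Fin n, j < i → a - Pi.single i 1 + Pi.single j 1 ∉ PB n f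

/-- `i` is externally active with respect to `a`: `a + e_i - e_j ∉ PB` for every `j < i`. -/
def ExtAct (f : Finset (Fin n) → ℕ) (a : Fin n → ℤ) (i : Fin n) : Prop :=
  ∀ j : Fin n, j < i → a + Pi.single i 1 - Pi.single j 1 ∉ PB n f

open scoped Classical in
/-- `Int(a)`: the set of internally active indices. -/
noncomputable def IntSet (f : Finset (Fin n) → ℕ) (a : Fin n → ℤ) : Finset (Fin n) :=
  Finset.univ.filter fun i => IntAct f a i

open scoped Classical in
/-- `Ext(a)`: the set of externally active indices. -/
noncomputable def ExtSet (f : Finset (Fin n) → ℕ) (a : Fin n → ℤ) : Finset (Fin n) :=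
  Finset.univ.filter fun i => ExtAct f a i

/-- `ι(a) = |Int(a)|`, the internal activity. -/
noncomputable def iota (f : Finset (Fin n) → ℕ) (a : Fin n → ℤ) : ℕ := (IntSet f a).card

/-- `ε(a) = |Ext(a)|`, the external activity. -/
noncomputable def eps (f : Finset (Fin n) → ℕ) (a : Fin n → ℤ) : ℕ := (ExtSet f a).card

/-- A univariate polynomial is interpolating if its set of exponents with nonzero
coefficient is a set of consecutive integers. -/
def Interpolating {R : Type*} [Semiring R] (p : Polynomial R) : Prop :=
  ∀ k l m : ℕ, k ≤ l → l ≤ m → p.coeff k ≠ 0 → p.coeff m ≠ 0 → p.coeff l ≠ 0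

/-!
The proof is an induction on `n` that slices along the last coordinate. The bases `a` with
`a (last m) = t` are exactly the `Fin.snoc a' t` with `a'` a basis of the polymatroid
`f_t(I) = min (f I) (f (I ∪ {last}) - t)`, and an index `i < last` is internally active for `a`
iff it is for `a'`. The last index is active iff `t = 0` or `t` takes its least admissible value
`f [n] - f [n-1]`. Hence `ι(a) = ι_t(a') + [t extremal]`, so every value between `ι(a)` and `n - 1`
is reached inside the slice of `a`, and the value `n` by the fully active basis of the extreme
slice. External activity is internal activity for the dual polymatroid, via `a ↦ f [n] - a`.
-/

open Finset Polynomial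

structure IsPolymatroidRank {α : Type*} [DecidableEq α] (f : Finset α → ℕ) : Prop where
  map_empty : f ∅ = 0
  mono : Monotone f
  submod : ∀ I J, f (I ∪ J) + f (I ∩ J) ≤ f I + f J

theorem IsPolymatroidRank.univ_le_singleton_add_compl {α : Type*} [Fintype α] [DecidableEq α]
    {f : Finset α → ℕ} (hf : IsPolymatroidRank f) (i : α) : f univ ≤ f {i} + f {i}ᶜ := by
  simpa [hf.map_empty] using hf.submod {i} {i}ᶜ

section Interpolating

variable {R α : Type*} [Semiring R]

theorem coeff_sum_X_pow_ne_zero_iff [CharZero R] (s : Finset α) (d : α → ℕ) (k : ℕ) :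
    (∑ a ∈ s, (X : R[X]) ^ d a).coeff k ≠ 0 ↔ k ∈ d '' s := by
  classical
  simp only [finsetSum_coeff, coeff_X_pow, sum_boole, ne_eq, Nat.cast_eq_zero, card_eq_zero,
    filter_eq_empty_iff, not_forall, not_not, Set.mem_image, mem_coe]
  exact ⟨fun ⟨a, ha, h⟩ => ⟨a, ha, h.symm⟩, fun ⟨a, ha, h⟩ => ⟨a, ha, h.symm⟩⟩

theorem interpolating_sum_X_pow [CharZero R] {s : Finset α} {d : α → ℕ} {N : ℕ}
    (hle : ∀ a ∈ s, d a ≤ N) (hIcc : ∀ a ∈ s, Set.Icc (d a) N ⊆ d '' s) :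
    Interpolating (∑ a ∈ s, (X : R[X]) ^ d a) := by
  intro k l m hkl hlm hk hm
  rw [coeff_sum_X_pow_ne_zero_iff] at hk hm ⊢
  obtain ⟨a, ha, rfl⟩ := hk
  obtain ⟨b, hb, rfl⟩ := hm
  exact hIcc a ha ⟨hkl, hlm.trans (hle b hb)⟩

end Interpolating

section Bases

variable {f : Finset (Fin n) → ℕ} {a : Fin n → ℤ}

theorem mem_PB_iff : a ∈ PB n f ↔
    (∀ i, 0 ≤ a i) ∧ (∀ I, ∑ j ∈ I, a j ≤ f I) ∧ ∑ j, a j = f univ := by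
  simp only [PB, mem_filter, Fintype.mem_piFinset, mem_Icc, forall_and]
  exact ⟨fun ⟨⟨h0, _⟩, h⟩ => ⟨h0, h⟩,
    fun ⟨h0, hI, h⟩ => ⟨⟨h0, fun i => by simpa using hI {i}⟩, hI, h⟩⟩

theorem iota_le (f : Finset (Fin n) → ℕ) (a : Fin n → ℤ) : iota f a ≤ n :=
  (card_le_univ _).trans_eq (Fintype.card_fin n)

theorem eps_le (f : Finset (Fin n) → ℕ) (a : Fin n → ℤ) : eps f a ≤ n :=
  (card_le_univ _).trans_eq (Fintype.card_fin n)

theorem sum_transfer (a : Fin n → ℤ) (i j : Fin n) (I : Finset (Fin n)) :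
    ∑ k ∈ I, (a - Pi.single i 1 + Pi.single j 1 : Fin n → ℤ) k
      = ∑ k ∈ I, a k - (if i ∈ I then 1 else 0) + (if j ∈ I then 1 else 0) := by
  simp only [Pi.add_apply, Pi.sub_apply, sum_add_distrib, sum_sub_distrib, sum_pi_single']

theorem Tight.union (hsub : ∀ I J, f (I ∪ J) + f (I ∩ J) ≤ f I + f J)
    (ha : ∀ I, ∑ j ∈ I, a j ≤ f I) {A B : Finset (Fin n)}
    (hA : Tight f a A) (hB : Tight f a B) : Tight f a (A ∪ B) := by
  have hAB : ∑ j ∈ A ∪ B, a j + ∑ j ∈ A ∩ B, a j = ∑ j ∈ A, a j + ∑ j ∈ B, a j :=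
    sum_union_inter
  have := ha (A ∪ B)
  have := ha (A ∩ B)
  have : (f (A ∪ B) : ℤ) + f (A ∩ B) ≤ f A + f B := mod_cast hsub A B
  unfold Tight at *
  linarith

theorem exists_maximal_tight_not_mem (hf : IsPolymatroidRank f)
    (ha : ∀ I, ∑ j ∈ I, a j ≤ f I) (i : Fin n) :
    ∃ U, i ∉ U ∧ Tight f a U ∧ ∀ I, i ∉ I → Tight f a I → I ⊆ U := by
  classical
  let p : Finset (Fin n) → Prop := fun I => i ∉ I ∧ Tight f a I
  have hU : p ((univ.filter p).sup id) := by
    refine sup_induction (p := p) ⟨notMem_empty i, by simp [Tight, hf.map_empty]⟩ ?_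
      fun I hI => (mem_filter.1 hI).2
    exact fun A hA B hB => ⟨by simp [hA.1, hB.1], hA.2.union hf.submod ha hB.2⟩
  exact ⟨_, hU.1, hU.2, fun I hi hI => le_sup (f := id) (mem_filter.2 ⟨mem_univ _, hi, hI⟩)⟩

theorem transfer_mem_PB (ha : a ∈ PB n f) {i j : Fin n} (hij : i ≠ j) (hi : 1 ≤ a i)
    (hj : ∀ I, j ∈ I → i ∉ I → ¬ Tight f a I) :
    a - Pi.single i 1 + Pi.single j 1 ∈ PB n f := by
  obtain ⟨hpos, hcon, htot⟩ := mem_PB_iff.1 ha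
  refine mem_PB_iff.2 ⟨fun k => ?_, fun I => ?_, ?_⟩
  · have := hpos k
    rcases eq_or_ne k i with rfl | hki
    · simp only [Pi.add_apply, Pi.sub_apply, Pi.single_eq_same, Pi.single_eq_of_ne hij]
      omega
    · simp only [Pi.add_apply, Pi.sub_apply, Pi.single_apply, hki, if_false]
      split_ifs <;> omega
  · have hI := hcon I
    rw [sum_transfer]
    by_cases hjI : j ∈ I
    · by_cases hiI : i ∈ I
      · rw [if_pos hiI, if_pos hjI]
        omega
      · have := lt_of_le_of_ne hI (hj I hjI hiI)
        rw [if_neg hiI, if_pos hjI]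
        omega
    · rw [if_neg hjI]
      split_ifs <;> omega
  · rw [sum_transfer]
    simp [htot]

theorem forall_transfer_not_mem_PB_iff (hf : IsPolymatroidRank f) (ha : a ∈ PB n f) (i : Fin n) :
    (∀ j ≠ i, a - Pi.single i 1 + Pi.single j 1 ∉ PB n f) ↔ a i = 0 ∨ Tight f a {i}ᶜ := by
  obtain ⟨hpos, hcon, -⟩ := mem_PB_iff.1 ha
  constructor
  · intro h
    by_contra! hne
    obtain ⟨U, hiU, hU, hmax⟩ := exists_maximal_tight_not_mem hf hcon i
    have hUi : U ⊆ {i}ᶜ := fun k hk => mem_compl.2 fun h => hiU (mem_singleton.1 h ▸ hk)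
    obtain ⟨j, hj, hjU⟩ := exists_of_ssubset (hUi.ssubset_of_ne fun h => hne.2 (h ▸ hU))
    have hji : j ≠ i := by simpa using hj
    refine h j hji (transfer_mem_PB ha hji.symm (by have := hpos i; omega) ?_)
    exact fun I hjI hiI hI => hjU (hmax I hiI hI hjI)
  · rintro h j hji hmem
    obtain ⟨hpos', hcon', -⟩ := mem_PB_iff.1 hmem
    rcases h with h0 | htight
    · simpa [Pi.single_apply, hji.symm, h0] using hpos' i
    · have := hcon' {i}ᶜ
      rw [sum_transfer, htight] at this
      simp [hji] at this

end Bases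

section Slice

variable {m : ℕ} {f : Finset (Fin (m + 1)) → ℕ} {t : ℕ}

theorem Finset.forall_fin_succ {P : Finset (Fin (m + 1)) → Prop} :
    (∀ J, P J) ↔ ∀ I : Finset (Fin m),
      P (I.map Fin.castSuccEmb) ∧ P (insert (Fin.last m) (I.map Fin.castSuccEmb)) := by
  classical
  refine ⟨fun h I => ⟨h _, h _⟩, fun h J => ?_⟩
  obtain ⟨I, hI⟩ : ∃ I : Finset (Fin m), J.erase (Fin.last m) = I.map Fin.castSuccEmb := by
    refine ⟨J.preimage Fin.castSucc (Fin.castSucc_injective m).injOn, ?_⟩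
    ext j
    induction j using Fin.lastCases <;> simp
  by_cases hL : Fin.last m ∈ J
  · rw [← insert_erase hL, hI]
    exact (h I).2
  · rw [← erase_eq_of_notMem hL, hI]
    exact (h I).1

@[simp]
theorem last_notMem_map_castSuccEmb (I : Finset (Fin m)) : Fin.last m ∉ I.map Fin.castSuccEmb := by
  simp

theorem map_castSuccEmb_univ : (univ : Finset (Fin m)).map Fin.castSuccEmb = {Fin.last m}ᶜ := by
  ext j
  induction j using Fin.lastCases <;> simp

theorem insert_last_map_castSuccEmb_univ :
    insert (Fin.last m) ((univ : Finset (Fin m)).map Fin.castSuccEmb) = univ := by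
  rw [map_castSuccEmb_univ, insert_compl_self]

/-- Rank function of the slice `{a ∈ PB f | a (last m) = t}`, seen on the first `m` coordinates. -/
def sliceRank (f : Finset (Fin (m + 1)) → ℕ) (t : ℕ) (I : Finset (Fin m)) : ℕ :=
  min (f (I.map Fin.castSuccEmb)) (f (insert (Fin.last m) (I.map Fin.castSuccEmb)) - t)

theorem le_sliceRank_iff (hmono : Monotone f) (ht : t ≤ f {Fin.last m}) {I : Finset (Fin m)}
    {x : ℤ} : x ≤ sliceRank f t I ↔
      x ≤ f (I.map Fin.castSuccEmb) ∧ x + t ≤ f (insert (Fin.last m) (I.map Fin.castSuccEmb)) := by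
  have := hmono (singleton_subset_iff.2 (mem_insert_self (Fin.last m) (I.map Fin.castSuccEmb)))
  unfold sliceRank
  omega

theorem sliceRank_univ (hmono : Monotone f) (htmin : f univ ≤ t + f {Fin.last m}ᶜ) :
    sliceRank f t univ = f univ - t := by
  have := hmono (subset_univ {Fin.last m}ᶜ)
  rw [sliceRank, insert_last_map_castSuccEmb_univ, map_castSuccEmb_univ]
  omega

theorem IsPolymatroidRank.slice (hf : IsPolymatroidRank f) (ht : t ≤ f {Fin.last m}) :
    IsPolymatroidRank (sliceRank f t) where
  map_empty := by simp only [sliceRank, Finset.map_empty, hf.map_empty, Nat.zero_min]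
  mono I J hIJ := by
    have hmap : I.map Fin.castSuccEmb ⊆ J.map Fin.castSuccEmb := map_subset_map.2 hIJ
    exact min_le_min (hf.mono hmap) (Nat.sub_le_sub_right (hf.mono (insert_subset_insert _ hmap)) t)
  submod A B := by
    simp only [sliceRank, map_union, map_inter]
    set L := Fin.last m
    set X := A.map Fin.castSuccEmb
    set Y := B.map Fin.castSuccEmb
    have hLX : L ∉ X := by simp [X, L]
    have hLY : L ∉ Y := by simp [Y, L]
    have hXY : f (X ∪ Y) + f (X ∩ Y) ≤ f X + f Y := hf.submod X Y
    have hXLY : f (insert L (X ∪ Y)) + f (X ∩ Y) ≤ f X + f (insert L Y) := by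
      simpa [union_insert, inter_insert_of_notMem hLX] using hf.submod X (insert L Y)
    have hLXY : f (insert L (X ∪ Y)) + f (X ∩ Y) ≤ f (insert L X) + f Y := by
      simpa [insert_union, insert_inter_of_notMem hLY] using hf.submod (insert L X) Y
    have hLXLY : f (insert L (X ∪ Y)) + f (insert L (X ∩ Y)) ≤ f (insert L X) + f (insert L Y) := by
      simpa only [← insert_union_distrib, ← insert_inter_distrib] using
        hf.submod (insert L X) (insert L Y)
    have hle : ∀ Z, t ≤ f (insert L Z) :=
      fun Z => ht.trans (hf.mono (singleton_subset_iff.2 (mem_insert_self L Z)))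
    have := hle X; have := hle Y; have := hle (X ∪ Y); have := hle (X ∩ Y)
    omega

theorem snoc_mem_PB_iff (hmono : Monotone f) (ht : t ≤ f {Fin.last m})
    (htmin : f univ ≤ t + f {Fin.last m}ᶜ) {a' : Fin m → ℤ} :
    Fin.snoc a' (t : ℤ) ∈ PB (m + 1) f ↔ a' ∈ PB m (sliceRank f t) := by
  have htf : t ≤ f univ := ht.trans (hmono (subset_univ _))
  simp only [mem_PB_iff, Fin.forall_fin_succ', Fin.snoc_castSucc, Fin.snoc_last,
    Finset.forall_fin_succ, sum_map, Fin.castSuccEmb_apply, sum_insert, last_notMem_map_castSuccEmb,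
    not_false_eq_true, Fin.sum_univ_castSucc, le_sliceRank_iff hmono ht,
    sliceRank_univ hmono htmin, forall_and, Nat.cast_nonneg, and_true, add_comm (t : ℤ),
    Nat.cast_sub htf, eq_sub_iff_add_eq]

theorem exists_eq_snoc_of_mem_PB {a : Fin (m + 1) → ℤ} (ha : a ∈ PB (m + 1) f) :
    ∃ (a' : Fin m → ℤ) (t : ℕ), a = Fin.snoc a' (t : ℤ) ∧ t ≤ f {Fin.last m} ∧
      f univ ≤ t + f {Fin.last m}ᶜ := by
  obtain ⟨hpos, hcon, htot⟩ := mem_PB_iff.1 ha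
  have hsplit := sum_add_sum_compl {Fin.last m} a
  have := hcon {Fin.last m}
  have := hcon {Fin.last m}ᶜ
  have := hpos (Fin.last m)
  simp only [sum_singleton] at *
  refine ⟨Fin.init a, (a (Fin.last m)).toNat, ?_, by omega, by omega⟩
  rw [Int.toNat_of_nonneg (hpos _), Fin.snoc_init_self]

theorem snoc_transfer (a' : Fin m → ℤ) (x : ℤ) (i j : Fin m) :
    Fin.snoc (a' - Pi.single i 1 + Pi.single j 1) x
      = (Fin.snoc a' x : Fin (m + 1) → ℤ) - Pi.single i.castSucc 1 + Pi.single j.castSucc 1 := by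
  ext k
  induction k using Fin.lastCases <;> simp [Pi.single_apply]

theorem intAct_snoc_castSucc_iff (hmono : Monotone f) (ht : t ≤ f {Fin.last m})
    (htmin : f univ ≤ t + f {Fin.last m}ᶜ) {a' : Fin m → ℤ} {i : Fin m} :
    IntAct f (Fin.snoc a' (t : ℤ)) i.castSucc ↔ IntAct (sliceRank f t) a' i := by
  simp only [IntAct, Fin.forall_fin_succ', Fin.castSucc_lt_castSucc_iff, ← snoc_transfer,
    snoc_mem_PB_iff hmono ht htmin, (Fin.castSucc_lt_last i).not_gt, false_imp_iff, and_true]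

theorem intAct_snoc_last_iff (hf : IsPolymatroidRank f) (ht : t ≤ f {Fin.last m})
    (htmin : f univ ≤ t + f {Fin.last m}ᶜ) {a' : Fin m → ℤ} (ha' : a' ∈ PB m (sliceRank f t)) :
    IntAct f (Fin.snoc a' (t : ℤ)) (Fin.last m) ↔ t = 0 ∨ f univ = t + f {Fin.last m}ᶜ := by
  have ha := (snoc_mem_PB_iff hf.mono ht htmin).2 ha'
  have htot := (mem_PB_iff.1 ha').2.2
  have := hf.mono (subset_univ {Fin.last m})
  rw [sliceRank_univ hf.mono htmin] at htot
  have hIntAct : IntAct f (Fin.snoc a' (t : ℤ)) (Fin.last m) ↔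
      ∀ j ≠ Fin.last m, Fin.snoc a' (t : ℤ) - Pi.single (Fin.last m) 1 + Pi.single j 1 ∉ PB _ f :=
    forall_congr' fun j => by rw [Fin.lt_last_iff_ne_last]
  rw [hIntAct, forall_transfer_not_mem_PB_iff hf ha, Tight, ← map_castSuccEmb_univ, sum_map]
  simp only [Fin.snoc_last, Fin.castSuccEmb_apply, Fin.snoc_castSucc, htot]
  omega

theorem iota_snoc (hf : IsPolymatroidRank f) (ht : t ≤ f {Fin.last m})
    (htmin : f univ ≤ t + f {Fin.last m}ᶜ) {a' : Fin m → ℤ} (ha' : a' ∈ PB m (sliceRank f t)) :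
    iota f (Fin.snoc a' (t : ℤ)) =
      iota (sliceRank f t) a' + if t = 0 ∨ f univ = t + f {Fin.last m}ᶜ then 1 else 0 := by
  classical
  simp only [iota, IntSet, card_filter, Fin.sum_univ_castSucc,
    intAct_snoc_castSucc_iff hf.mono ht htmin, intAct_snoc_last_iff hf ht htmin ha']

end Slice

section Interval

variable {m : ℕ} {f : Finset (Fin (m + 1)) → ℕ}

theorem exists_iota_eq_succ (hf : IsPolymatroidRank f)
    (hslice : ∀ t ≤ f {Fin.last m}, m ∈ iota (sliceRank f t) '' PB m (sliceRank f t)) :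
    m + 1 ∈ iota f '' PB (m + 1) f := by
  have := hf.univ_le_singleton_add_compl (Fin.last m)
  have := hf.mono (subset_univ {Fin.last m}ᶜ)
  have ht : f univ - f {Fin.last m}ᶜ ≤ f {Fin.last m} := by omega
  have htmin : f univ ≤ (f univ - f {Fin.last m}ᶜ) + f {Fin.last m}ᶜ := by omega
  obtain ⟨a', ha', hιa'⟩ := hslice _ ht
  refine ⟨_, (snoc_mem_PB_iff hf.mono ht htmin).2 ha', ?_⟩
  rw [iota_snoc hf ht htmin ha', hιa', if_pos (Or.inr (by omega))]

theorem Icc_iota_subset_of_slices (hf : IsPolymatroidRank f)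
    (htop : m + 1 ∈ iota f '' PB (m + 1) f)
    (hslice : ∀ t ≤ f {Fin.last m}, ∀ a' ∈ PB m (sliceRank f t),
      Set.Icc (iota (sliceRank f t) a') m ⊆ iota (sliceRank f t) '' PB m (sliceRank f t))
    {a : Fin (m + 1) → ℤ} (ha : a ∈ PB (m + 1) f) :
    Set.Icc (iota f a) (m + 1) ⊆ iota f '' PB (m + 1) f := by
  rintro l ⟨hal, hlm⟩
  obtain ⟨a', t, rfl, ht, htmin⟩ := exists_eq_snoc_of_mem_PB ha
  rcases hlm.eq_or_lt with rfl | hlm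
  · exact htop
  have ha' := (snoc_mem_PB_iff hf.mono ht htmin).1 ha
  have hιa := iota_snoc hf ht htmin ha'
  set e := if t = 0 ∨ f univ = t + f {Fin.last m}ᶜ then 1 else 0
  obtain ⟨b', hb', hιb'⟩ := hslice t ht a' ha' (show l - e ∈ Set.Icc _ m by
    constructor <;> omega)
  refine ⟨_, (snoc_mem_PB_iff hf.mono ht htmin).2 hb', ?_⟩
  rw [iota_snoc hf ht htmin hb', hιb']
  omega

end Interval

theorem iota_mem_image_and_Icc_iota_subset :
    ∀ {n : ℕ} {f : Finset (Fin n) → ℕ}, IsPolymatroidRank f →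
      n ∈ iota f '' PB n f ∧ ∀ a ∈ PB n f, Set.Icc (iota f a) n ⊆ iota f '' PB n f
  | 0, f, hf => by
    have hι (a : Fin 0 → ℤ) : iota f a = 0 := by simp [iota, IntSet]
    have h0 : (0 : Fin 0 → ℤ) ∈ PB 0 f :=
      mem_PB_iff.2 ⟨by simp, fun I => by simp [Subsingleton.elim I ∅, hf.map_empty], by
        simp [univ_eq_empty, hf.map_empty]⟩
    refine ⟨⟨0, h0, hι 0⟩, fun a ha l hl => ⟨a, ha, ?_⟩⟩
    simp only [hι, Set.mem_Icc] at hl ⊢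
    omega
  | m + 1, f, hf =>
    have hslice t (ht : t ≤ f {Fin.last m}) := iota_mem_image_and_Icc_iota_subset (hf.slice ht)
    have htop := exists_iota_eq_succ hf fun t ht => (hslice t ht).1
    ⟨htop, fun _ ha => Icc_iota_subset_of_slices hf htop (fun t ht => (hslice t ht).2) ha⟩

section Dual

variable {α : Type*} [Fintype α] [DecidableEq α] {f : Finset α → ℕ}

/-- The dual polymatroid with respect to the constant bound `f univ` on each coordinate:
its bases are the `f univ - a` for the bases `a` of `f`. -/
def dualRank (f : Finset α → ℕ) (I : Finset α) : ℕ :=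
  #I * f univ + f Iᶜ - f univ

theorem le_card_mul_add_compl (I : Finset α) : f univ ≤ #I * f univ + f Iᶜ := by
  rcases I.eq_empty_or_nonempty with rfl | hI
  · simp
  · exact (Nat.le_mul_of_pos_left _ hI.card_pos).trans (Nat.le_add_right _ _)

theorem dualRank_cast (I : Finset α) :
    (dualRank f I : ℤ) = #I * f univ + f Iᶜ - f univ := by
  rw [dualRank, Nat.cast_sub (le_card_mul_add_compl I)]
  push_cast
  ring

theorem IsPolymatroidRank.dual (hf : IsPolymatroidRank f) : IsPolymatroidRank (dualRank f) where
  map_empty := by simp [dualRank]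
  mono I J hIJ := by
    rcases (card_le_card hIJ).eq_or_lt with h | h
    · rw [eq_of_subset_of_card_le hIJ h.ge]
    · have := hf.mono (subset_univ Iᶜ)
      have hcard := Nat.mul_le_mul_right (f univ) (Nat.succ_le_of_lt h)
      rw [Nat.succ_mul] at hcard
      unfold dualRank
      omega
  submod I J := by
    have hcard : (#(I ∪ J) : ℤ) + #(I ∩ J) = #I + #J := mod_cast card_union_add_card_inter I J
    have : (f (Iᶜ ∪ Jᶜ) : ℤ) + f (Iᶜ ∩ Jᶜ) ≤ f Iᶜ + f Jᶜ := mod_cast hf.submod Iᶜ Jᶜ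
    have key : (dualRank f (I ∪ J) : ℤ) + dualRank f (I ∩ J) ≤ dualRank f I + dualRank f J := by
      simp only [dualRank_cast, compl_union, compl_inter]
      linear_combination (f univ : ℤ) * hcard + this
    exact_mod_cast key

end Dual

section DualBases

variable {f : Finset (Fin n) → ℕ} {a : Fin n → ℤ}

theorem mem_PB_iff_mem_PB_dualRank (hf0 : f ∅ = 0) (hmono : Monotone f) :
    a ∈ PB n f ↔ (fun i => (f univ : ℤ) - a i) ∈ PB n (dualRank f) := by
  have hsum (I : Finset (Fin n)) : ∑ j ∈ I, ((f univ : ℤ) - a j) = #I * f univ - ∑ j ∈ I, a j := by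
    simp [sum_sub_distrib]
  have hsplit (I : Finset (Fin n)) : ∑ j ∈ I, a j + ∑ j ∈ Iᶜ, a j = ∑ j, a j :=
    sum_add_sum_compl I a
  have hcompl (I : Finset (Fin n)) : (f Iᶜ : ℤ) ≤ f univ := mod_cast hmono (subset_univ _)
  simp only [mem_PB_iff, hsum, dualRank_cast, compl_univ, hf0, card_univ, Fintype.card_fin]
  constructor
  · rintro ⟨hpos, hcon, htot⟩
    refine ⟨fun i => ?_, fun I => ?_, by push_cast; linarith⟩
    · have := hcon {i}
      have : (f {i} : ℤ) ≤ f univ := mod_cast hmono (subset_univ _)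
      simp only [sum_singleton] at *
      linarith
    · linarith [hcon Iᶜ, hsplit I]
  · rintro ⟨-, hcon, htot⟩
    have htot : ∑ j, a j = f univ := by push_cast at htot; linarith
    refine ⟨fun i => ?_, fun I => ?_, htot⟩
    · have := hcon {i}
      have := hcompl {i}
      simp only [sum_singleton, card_singleton] at *
      linarith
    · have := hcon Iᶜ
      rw [compl_compl] at this
      linarith [hsplit I]

open scoped Classical in
theorem eps_eq_iota_dualRank (hf0 : f ∅ = 0) (hmono : Monotone f) (a : Fin n → ℤ) :
    eps f a = iota (dualRank f) (fun i => (f univ : ℤ) - a i) := by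
  have hExt (i : Fin n) : ExtAct f a i ↔ IntAct (dualRank f) (fun i => (f univ : ℤ) - a i) i := by
    refine forall₂_congr fun j _ => not_congr ?_
    rw [mem_PB_iff_mem_PB_dualRank hf0 hmono]
    convert Iff.rfl using 2
    ext k
    simp only [Pi.add_apply, Pi.sub_apply]
    ring
  unfold eps iota ExtSet IntSet
  exact congrArg card (filter_congr fun i _ => hExt i)

theorem Icc_eps_subset_image (hf : IsPolymatroidRank f) (ha : a ∈ PB n f) :
    Set.Icc (eps f a) n ⊆ eps f '' PB n f := by
  intro l hl
  rw [eps_eq_iota_dualRank hf.map_empty hf.mono] at hl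
  obtain ⟨b, hb, rfl⟩ := (iota_mem_image_and_Icc_iota_subset hf.dual).2 _
    ((mem_PB_iff_mem_PB_dualRank hf.map_empty hf.mono).1 ha) hl
  refine ⟨fun i => (f univ : ℤ) - b i, ?_, ?_⟩
  · simpa [mem_PB_iff_mem_PB_dualRank hf.map_empty hf.mono] using hb
  · simp [eps_eq_iota_dualRank hf.map_empty hf.mono]

end DualBases

theorem J_x_one_and_one_y_interpolating_general
    (n : ℕ) (f : Finset (Fin n) → ℕ)
    (hf0 : f ∅ = 0)
    (hmono : ∀ I J : Finset (Fin n), I ⊆ J → f I ≤ f J)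
    (hsub : ∀ I J : Finset (Fin n), f (I ∪ J) + f (I ∩ J) ≤ f I + f J) :
    Interpolating (∑ a ∈ PB n f, (Polynomial.X : Polynomial ℤ) ^ iota f a) ∧
    Interpolating (∑ a ∈ PB n f, (Polynomial.X : Polynomial ℤ) ^ eps f a) := by
  have hf : IsPolymatroidRank f := ⟨hf0, fun I J => hmono I J, hsub⟩
  exact ⟨interpolating_sum_X_pow (fun a _ => iota_le f a)
      (iota_mem_image_and_Icc_iota_subset hf).2,
    interpolating_sum_X_pow (fun a _ => eps_le f a) fun _ ha => Icc_eps_subset_image hf ha⟩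

/-- `J_P(x,1) = Σ_a x^(ι(a))` and `J_P(1,y) = Σ_a y^(ε(a))` are interpolating. -/
theorem J_x_one_and_one_y_interpolating
    (n : ℕ) (hn : 0 < n) (f : Finset (Fin n) → ℕ)
    (hf0 : f ∅ = 0)
    (hmono : ∀ I J : Finset (Fin n), I ⊆ J → f I ≤ f J)
    (hsub : ∀ I J : Finset (Fin n), f (I ∪ J) + f (I ∩ J) ≤ f I + f J) :
    Interpolating (∑ a ∈ PB n f, (Polynomial.X : Polynomial ℤ) ^ iota f a) ∧
    Interpolating (∑ a ∈ PB n f, (Polynomial.X : Polynomial ℤ) ^ eps f a) :=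
  J_x_one_and_one_y_interpolating_general n f hf0 hmono hsub
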